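/- Let ψ, ν ∈ Ψ and, for δ ∈ (0,1) and p ≥ 2, set R(δ, p, ψ) = inf{ δ^{2/(pβ+2)}·ψ(αp)^{pβ/(pβ+2)} : α, β > 1, 1/α + 1/β = 1 }. Assume lim_{δ → 0+} sup_{p ≥ 2} R(δ, p, ψ)/ν(p) = 0. Then every martingale (S_n, 𝓕_n) with sup_n ‖S_n‖_{G(ψ)} < ∞ converges almost surely to a random variable S, and lim_{n → ∞} ‖S_n − S‖_{G(ν)} = 0. -/

import Mathlib

/-!
Bounded in `G(ψ)`, the martingale is bounded in every `L^q`, `q ≥ 2`, by `M ψ(q)`; bounded in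
`L^4`, it converges a.e. and (Vitali) in `L^2` to a limit obeying the same bound. For
`η = S_n - S` and `δ = |η|_2 → 0`, Lyapunov's inequality between `L^2` and `L^{αp}` gives
`|η|_p ≤ δ^{2/(pβ)} (2M ψ(αp))^{1-2/(pβ)}`. As `s ↦ s log ψ(s)` increases, `ψ ≥ min 1 (ψ 2)`
on `[2, ∞)`, which pays for lowering the exponents to those of `R`:
`|η|_p ≤ K δ^{2/(pβ+2)} ψ(αp)^{pβ/(pβ+2)}`. Hence `‖η‖_{G(ν)} ≤ K sup_p R(δ,p,ψ)/ν(p) → 0`.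
-/

open MeasureTheory Filter Set
open scoped ENNReal Topology

/-- `ψ` belongs to the class `Ψ`: `p ↦ p·log ψ(p)` is continuous, convex, increasing,
tends to `+∞`, and `ψ(p) → ∞` as `p → ∞`; `ψ` is positive on `[2,∞)`. -/
structure PsiClass (ψ : ℝ → ℝ) : Prop where
  pos : ∀ p : ℝ, 2 ≤ p → 0 < ψ p
  cont : ContinuousOn (fun p => p * Real.log (ψ p)) (Set.Ici 2)
  convex : ConvexOn ℝ (Set.Ici 2) (fun p => p * Real.log (ψ p))
  mono : MonotoneOn (fun p => p * Real.log (ψ p)) (Set.Ici 2)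
  tendsto_top : Filter.Tendsto (fun p => p * Real.log (ψ p)) Filter.atTop Filter.atTop
  psi_tendsto_top : Filter.Tendsto ψ Filter.atTop Filter.atTop

/-- The norm `‖η‖_{G(ψ)} = sup_{p ≥ 2} |η|_p / ψ(p)` (valued in `ℝ≥0∞`). -/
noncomputable def Gnorm {Ω : Type*} [MeasurableSpace Ω] (μ : Measure Ω)
    (ψ : ℝ → ℝ) (η : Ω → ℝ) : ℝ≥0∞ :=
  ⨆ p : {p : ℝ // 2 ≤ p}, eLpNorm η (ENNReal.ofReal (p : ℝ)) μ / ENNReal.ofReal (ψ (p : ℝ))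

/-- `R(δ,p,ψ) = inf { δ^{2/(pβ+2)} · ψ(αp)^{pβ/(pβ+2)} : α, β > 1, 1/α + 1/β = 1 }`. -/
noncomputable def Rfun (ψ : ℝ → ℝ) (δ p : ℝ) : ℝ :=
  sInf {r | ∃ α β : ℝ, 1 < α ∧ 1 < β ∧ 1/α + 1/β = 1 ∧
    r = δ ^ (2/(p*β + 2)) * (ψ (α*p)) ^ (p*β/(p*β + 2))}

open scoped NNReal

namespace MeasureTheory

variable {α β : Type*} {m : MeasurableSpace α} {μ : Measure α} [NormedAddCommGroup β]

theorem eLpNorm_ofReal_eq_lintegral {f : α → β} {p : ℝ} (hp : 0 < p) :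
    eLpNorm f (ENNReal.ofReal p) μ = (∫⁻ x, ‖f x‖ₑ ^ p ∂μ) ^ (1 / p) := by
  rw [eLpNorm_eq_lintegral_rpow_enorm_toReal (by simpa using hp) ENNReal.ofReal_ne_top,
    ENNReal.toReal_ofReal hp.le]

theorem eLpNorm_le_eLpNorm_rpow_mul_eLpNorm_rpow {f : α → β} (hf : AEStronglyMeasurable f μ)
    {p₀ p₁ p θ : ℝ} (hp₀ : 0 < p₀) (hp₁ : 0 < p₁) (hθ₀ : 0 ≤ θ) (hθ₁ : θ ≤ 1)
    (hp : 1 / p = θ / p₀ + (1 - θ) / p₁) :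
    eLpNorm f (ENNReal.ofReal p) μ ≤
      eLpNorm f (ENNReal.ofReal p₀) μ ^ θ * eLpNorm f (ENNReal.ofReal p₁) μ ^ (1 - θ) := by
  have hp_pos : 0 < p := by
    rw [← one_div_pos, hp]
    rcases hθ₀.eq_or_lt with rfl | hθ
    · simpa using hp₁
    · exact add_pos_of_pos_of_nonneg (by positivity) (div_nonneg (by linarith) hp₁.le)
  set I : ℝ → ℝ≥0∞ := fun r => ∫⁻ x, ‖f x‖ₑ ^ r ∂μ
  have hholder : I p ≤ I p₀ ^ (θ * p / p₀) * I p₁ ^ ((1 - θ) * p / p₁) := by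
    have hsplit : ∀ x, ‖f x‖ₑ ^ p =
        (‖f x‖ₑ ^ p₀) ^ (θ * p / p₀) * (‖f x‖ₑ ^ p₁) ^ ((1 - θ) * p / p₁) := by
      intro x
      have h₀ : p₀ * (θ * p / p₀) = θ * p := by field_simp
      have h₁ : p₁ * ((1 - θ) * p / p₁) = (1 - θ) * p := by field_simp
      rw [← ENNReal.rpow_mul, ← ENNReal.rpow_mul, h₀, h₁, ← ENNReal.rpow_add_of_nonneg _ _
        (by positivity) (mul_nonneg (by linarith) hp_pos.le)]
      ring_nf
    simp only [I, hsplit]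
    refine ENNReal.lintegral_mul_norm_pow_le (hf.enorm.pow_const _) (hf.enorm.pow_const _)
      (by positivity) (div_nonneg (mul_nonneg (by linarith) hp_pos.le) hp₁.le) ?_
    rw [mul_div_right_comm, mul_div_right_comm, ← add_mul, ← hp, one_div_mul_cancel hp_pos.ne']
  rw [eLpNorm_ofReal_eq_lintegral hp_pos, eLpNorm_ofReal_eq_lintegral hp₀,
    eLpNorm_ofReal_eq_lintegral hp₁, ← ENNReal.rpow_mul, ← ENNReal.rpow_mul]
  calc I p ^ (1 / p)
      ≤ (I p₀ ^ (θ * p / p₀) * I p₁ ^ ((1 - θ) * p / p₁)) ^ (1 / p) := by gcongr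
    _ = I p₀ ^ (1 / p₀ * θ) * I p₁ ^ (1 / p₁ * (1 - θ)) := by
      rw [ENNReal.mul_rpow_of_nonneg _ _ (by positivity), ← ENNReal.rpow_mul,
        ← ENNReal.rpow_mul]
      congr 2 <;> field_simp

theorem unifIntegrable_of_eLpNorm_le {ι : Type*} {f : ι → α → β} {p q : ℝ≥0∞}
    (hp : p ≠ 0) (hpq : p < q) (hf : ∀ i, AEStronglyMeasurable (f i) μ) {M : ℝ≥0}
    (hM : ∀ i, eLpNorm (f i) q μ ≤ M) : UnifIntegrable f p μ := by
  set r := 1 / p.toReal - 1 / q.toReal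
  have hr : 0 < r := by
    have hp' : 0 < p.toReal := ENNReal.toReal_pos hp hpq.ne_top
    rcases eq_or_ne q ∞ with rfl | hq
    · simpa [r] using hp'
    · simp only [r, one_div, sub_pos]
      exact inv_strictAnti₀ hp' ((ENNReal.toReal_lt_toReal hpq.ne_top hq).2 hpq)
  have hlim : Tendsto (fun δ : ℝ => (M : ℝ≥0∞) * ENNReal.ofReal δ ^ r) (𝓝[>] 0) (𝓝 0) := by
    have : Tendsto (fun δ : ℝ => ENNReal.ofReal δ ^ r) (𝓝 0) (𝓝 0) :=
      ((ENNReal.continuous_rpow_const.comp ENNReal.continuous_ofReal).tendsto' 0 0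
        (by simp [hr]))
    simpa using ENNReal.Tendsto.const_mul (this.mono_left nhdsWithin_le_nhds)
      (Or.inr ENNReal.coe_ne_top)
  intro ε hε
  obtain ⟨δ, hδε, hδ⟩ :=
    ((hlim.eventually (eventually_le_nhds (ENNReal.ofReal_pos.2 hε))).and
      self_mem_nhdsWithin).exists
  refine ⟨δ, hδ, fun i s hs hμs => ?_⟩
  rw [eLpNorm_indicator_eq_eLpNorm_restrict hs]
  calc eLpNorm (f i) p (μ.restrict s)
      ≤ eLpNorm (f i) q (μ.restrict s) * μ.restrict s univ ^ r :=
        eLpNorm_le_eLpNorm_mul_rpow_measure_univ hpq.le (hf i).restrict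
    _ ≤ M * ENNReal.ofReal δ ^ r := by
        rw [Measure.restrict_apply_univ]
        gcongr
        exact (eLpNorm_mono_measure _ Measure.restrict_le_self).trans (hM i)
    _ ≤ ENNReal.ofReal ε := hδε

theorem tendsto_eLpNorm_sub_of_ae_tendsto [IsFiniteMeasure μ] {f : ℕ → α → β} {g : α → β}
    {p q : ℝ≥0∞} (hp : 1 ≤ p) (hpq : p < q) (hf : ∀ n, AEStronglyMeasurable (f n) μ)
    {M : ℝ≥0} (hM : ∀ n, eLpNorm (f n) q μ ≤ M)
    (hfg : ∀ᵐ x ∂μ, Tendsto (fun n => f n x) atTop (𝓝 (g x))) :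
    Tendsto (fun n => eLpNorm (f n - g) p μ) atTop (𝓝 0) := by
  have hg : MemLp g q μ :=
    ⟨aestronglyMeasurable_of_tendsto_ae atTop hf hfg,
      (Lp.eLpNorm_le_of_ae_tendsto (Eventually.of_forall hM) hf hfg).trans_lt
        ENNReal.coe_lt_top⟩
  exact tendsto_Lp_finite_of_tendsto_ae hp hpq.ne_top hf (hg.mono_exponent hpq.le)
    (unifIntegrable_of_eLpNorm_le (by positivity) hpq hf hM) hfg

theorem eLpNorm_sub_le_two_mul_of_ae_tendsto {f : ℕ → α → β} {g : α → β}
    (hf : ∀ n, AEStronglyMeasurable (f n) μ)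
    (hfg : ∀ᵐ x ∂μ, Tendsto (fun n => f n x) atTop (𝓝 (g x))) {p b : ℝ≥0∞} (hp : 1 ≤ p)
    (hb : ∀ n, eLpNorm (f n) p μ ≤ b) (n : ℕ) :
    eLpNorm (f n - g) p μ ≤ 2 * b :=
  (eLpNorm_sub_le (hf n) (aestronglyMeasurable_of_tendsto_ae atTop hf hfg) hp).trans <| by
    rw [two_mul]
    exact add_le_add (hb n) (Lp.eLpNorm_le_of_ae_tendsto (Eventually.of_forall hb) hf hfg)

theorem Submartingale.ae_tendsto_and_tendsto_eLpNorm_limitProcess [IsProbabilityMeasure μ]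
    {ℱ : Filtration ℕ m} {f : ℕ → α → ℝ} (hf : Submartingale f ℱ μ) {p q : ℝ≥0∞}
    (hp : 1 ≤ p) (hpq : p < q) {B : ℝ≥0} (hB : ∀ n, eLpNorm (f n) q μ ≤ B) :
    (∀ᵐ x ∂μ, Tendsto (fun n => f n x) atTop (𝓝 (ℱ.limitProcess f μ x))) ∧
      Tendsto (fun n => eLpNorm (f n - ℱ.limitProcess f μ) p μ) atTop (𝓝 0) := by
  have hfm n : AEStronglyMeasurable (f n) μ := (hf.integrable n).aestronglyMeasurable
  have hae := hf.ae_tendsto_limitProcess (R := B) fun n =>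
    (eLpNorm_le_eLpNorm_of_exponent_le (hp.trans hpq.le) (hfm n)).trans (hB n)
  exact ⟨hae, tendsto_eLpNorm_sub_of_ae_tendsto hp hpq hfm hB hae⟩

end MeasureTheory

theorem rpow_mul_mul_rpow_one_sub_le {δ C c y t u : ℝ} (hδ₀ : 0 ≤ δ) (hδ₁ : δ ≤ 1) (hC : 1 ≤ C)
    (hc : 0 < c) (hc₁ : c ≤ 1) (hcy : c ≤ y) (hu : 0 ≤ u) (hut : u ≤ t) (ht : t ≤ 1) :
    δ ^ t * (C * y) ^ (1 - t) ≤ C / c * (δ ^ u * y ^ (1 - u)) := by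
  have hy : 0 < y := hc.trans_le hcy
  have hC_pow : C ^ (1 - t) ≤ C :=
    Real.rpow_le_self_of_one_le hC (by linarith)
  have hy_pow : y ^ (u - t) ≤ c⁻¹ :=
    calc y ^ (u - t) ≤ c ^ (u - t) := Real.rpow_le_rpow_of_nonpos hc hcy (by linarith)
      _ ≤ c ^ (-1 : ℝ) := Real.rpow_le_rpow_of_exponent_ge hc hc₁ (by linarith)
      _ = c⁻¹ := Real.rpow_neg_one c
  have hsplit : y ^ (1 - t) = y ^ (1 - u) * y ^ (u - t) := by
    rw [← Real.rpow_add hy]; ring_nf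
  calc δ ^ t * (C * y) ^ (1 - t) = δ ^ t * C ^ (1 - t) * (y ^ (1 - u) * y ^ (u - t)) := by
        rw [Real.mul_rpow (by linarith) hy.le, hsplit, mul_assoc]
    _ ≤ δ ^ u * C * (y ^ (1 - u) * c⁻¹) := by
        have hδ_pow := Real.rpow_le_rpow_of_exponent_ge' hδ₀ hδ₁ hu hut
        gcongr ?_ * ?_ * (_ * ?_)
    _ = C / c * (δ ^ u * y ^ (1 - u)) := by ring

theorem PsiClass.min_one_le {ψ : ℝ → ℝ} (hψ : PsiClass ψ) {s : ℝ} (hs : 2 ≤ s) :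
    min 1 (ψ 2) ≤ ψ s := by
  have hψ2 := hψ.pos 2 le_rfl
  have hψs := hψ.pos s hs
  have hmono : 2 * Real.log (ψ 2) ≤ s * Real.log (ψ s) := hψ.mono self_mem_Ici hs hs
  rcases le_total 1 (ψ 2) with h | h
  · rw [min_eq_left h, ← Real.log_nonneg_iff hψs]
    have := Real.log_nonneg h
    nlinarith
  · rw [min_eq_right h, ← Real.log_le_log_iff hψ2 hψs]
    have := Real.log_nonpos hψ2.le h
    nlinarith

theorem le_mul_Rfun {ψ : ℝ → ℝ} {δ p x K : ℝ} (hK : 0 < K)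
    (h : ∀ α β : ℝ, 1 < α → 1 < β → 1 / α + 1 / β = 1 →
      x ≤ K * (δ ^ (2 / (p * β + 2)) * ψ (α * p) ^ (p * β / (p * β + 2)))) :
    x ≤ K * Rfun ψ δ p := by
  rw [← div_le_iff₀' hK]
  refine le_csInf ⟨_, 2, 2, one_lt_two, one_lt_two, by norm_num, rfl⟩ ?_
  rintro r ⟨α, β, hα, hβ, hαβ, rfl⟩
  rw [div_le_iff₀' hK]
  exact h α β hα hβ hαβ

theorem Rfun_zero (ψ : ℝ → ℝ) {p : ℝ} (hp : 0 ≤ p) : Rfun ψ 0 p = 0 := by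
  suffices h : {r | ∃ α β : ℝ, 1 < α ∧ 1 < β ∧ 1/α + 1/β = 1 ∧
      r = (0 : ℝ) ^ (2/(p*β + 2)) * (ψ (α*p)) ^ (p*β/(p*β + 2))} = {0} by
    rw [Rfun, h, csInf_singleton]
  ext r
  constructor
  · rintro ⟨α, β, -, hβ, -, rfl⟩
    rw [Set.mem_singleton_iff, Real.zero_rpow (by positivity), zero_mul]
  · rintro rfl
    refine ⟨2, 2, one_lt_two, one_lt_two, by norm_num, ?_⟩
    rw [Real.zero_rpow (by positivity), zero_mul]

theorem tendsto_iSup_Rfun_div_nhdsGE {ψ ν : ℝ → ℝ}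
    (hR : Tendsto (fun δ : ℝ => ⨆ p : {p : ℝ // 2 ≤ p}, ENNReal.ofReal (Rfun ψ δ p / ν p))
      (𝓝[>] 0) (𝓝 0)) :
    Tendsto (fun δ : ℝ => ⨆ p : {p : ℝ // 2 ≤ p}, ENNReal.ofReal (Rfun ψ δ p / ν p))
      (𝓝[≥] 0) (𝓝 0) := by
  rw [← Ioi_insert, nhdsWithin_insert, tendsto_sup]
  have h₀ : ⨆ p : {p : ℝ // 2 ≤ p}, ENNReal.ofReal (Rfun ψ 0 p / ν p) = 0 :=
    ENNReal.iSup_eq_zero.2 fun p => by simp [Rfun_zero ψ (zero_le_two.trans p.2)]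
  exact ⟨h₀ ▸ tendsto_pure_nhds _ _, hR⟩

section

variable {Ω : Type*} {m : MeasurableSpace Ω} {μ : Measure Ω}

theorem eLpNorm_le_eLpNorm_two_rpow_mul_eLpNorm_rpow [IsProbabilityMeasure μ] {η : Ω → ℝ}
    (hη : AEStronglyMeasurable η μ) {p α β : ℝ} (hp : 2 ≤ p) (hα : 1 < α) (hβ : 1 < β)
    (hαβ : 1 / α + 1 / β = 1) :
    eLpNorm η (ENNReal.ofReal p) μ ≤
      eLpNorm η 2 μ ^ (2 / (p * β)) *
        eLpNorm η (ENNReal.ofReal (α * p)) μ ^ (1 - 2 / (p * β)) := by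
  have hpβ : 2 < p * β := by nlinarith
  have hθ : 2 / (p * β) ≤ 1 := (div_le_one (by positivity)).2 hpβ.le
  have hq : 0 < α * (p - 2 / β) := by
    have : 2 / β < p := by rw [div_lt_iff₀ (by positivity)]; linarith
    nlinarith
  calc eLpNorm η (ENNReal.ofReal p) μ
      ≤ eLpNorm η (ENNReal.ofReal 2) μ ^ (2 / (p * β)) *
          eLpNorm η (ENNReal.ofReal (α * (p - 2 / β))) μ ^ (1 - 2 / (p * β)) := by
        refine eLpNorm_le_eLpNorm_rpow_mul_eLpNorm_rpow hη two_pos hq (by positivity) hθ ?_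
        have hαβ' : α + β = α * β := by field_simp at hαβ; linarith
        field_simp
        rw [mul_div_assoc, div_self (by linarith), mul_one]
        linarith
    _ ≤ eLpNorm η 2 μ ^ (2 / (p * β)) *
          eLpNorm η (ENNReal.ofReal (α * p)) μ ^ (1 - 2 / (p * β)) := by
        rw [ENNReal.ofReal_ofNat]
        gcongr
        exact eLpNorm_le_eLpNorm_of_exponent_le (ENNReal.ofReal_le_ofReal (by
            have : 0 < 2 / β := by positivity
            nlinarith)) hη

theorem eLpNorm_le_mul_Rfun [IsProbabilityMeasure μ] {ψ : ℝ → ℝ} (hψ : PsiClass ψ)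
    {η : Ω → ℝ} (hη : AEStronglyMeasurable η μ) {C δ : ℝ} (hC : 1 ≤ C) (hδ₀ : 0 ≤ δ)
    (hδ₁ : δ ≤ 1) (h₂ : eLpNorm η 2 μ ≤ ENNReal.ofReal δ)
    (hbound : ∀ q, 2 ≤ q → eLpNorm η (ENNReal.ofReal q) μ ≤ ENNReal.ofReal (C * ψ q))
    {p : ℝ} (hp : 2 ≤ p) :
    eLpNorm η (ENNReal.ofReal p) μ ≤ ENNReal.ofReal (C / min 1 (ψ 2) * Rfun ψ δ p) := by
  have hc : 0 < min 1 (ψ 2) := lt_min one_pos (hψ.pos 2 le_rfl)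
  rw [← ENNReal.ofReal_toReal ((hbound p hp).trans_lt ENNReal.ofReal_lt_top).ne]
  refine ENNReal.ofReal_le_ofReal (le_mul_Rfun (by positivity) fun α β hα hβ hαβ => ?_)
  have hαp : 2 ≤ α * p := by nlinarith
  have hpβ : 2 ≤ p * β := by nlinarith
  have hψαp : min 1 (ψ 2) ≤ ψ (α * p) := hψ.min_one_le hαp
  have hψαp_pos : 0 < ψ (α * p) := hc.trans_le hψαp
  have hθ : 2 / (p * β) ≤ 1 := (div_le_one (by positivity)).2 hpβ
  have hinterp : eLpNorm η (ENNReal.ofReal p) μ ≤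
      ENNReal.ofReal (δ ^ (2 / (p * β)) * (C * ψ (α * p)) ^ (1 - 2 / (p * β))) := by
    calc eLpNorm η (ENNReal.ofReal p) μ
        ≤ eLpNorm η 2 μ ^ (2 / (p * β)) *
            eLpNorm η (ENNReal.ofReal (α * p)) μ ^ (1 - 2 / (p * β)) :=
          eLpNorm_le_eLpNorm_two_rpow_mul_eLpNorm_rpow hη hp hα hβ hαβ
      _ ≤ ENNReal.ofReal δ ^ (2 / (p * β)) *
            ENNReal.ofReal (C * ψ (α * p)) ^ (1 - 2 / (p * β)) := by
          gcongr
          exact hbound _ hαp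
      _ = ENNReal.ofReal (δ ^ (2 / (p * β)) * (C * ψ (α * p)) ^ (1 - 2 / (p * β))) := by
          rw [ENNReal.ofReal_rpow_of_nonneg hδ₀ (by positivity),
            ENNReal.ofReal_rpow_of_nonneg (by nlinarith) (by linarith),
            ← ENNReal.ofReal_mul (by positivity)]
  have hexp : p * β / (p * β + 2) = 1 - 2 / (p * β + 2) := by field_simp; ring
  rw [hexp]
  refine (ENNReal.toReal_le_of_le_ofReal (by positivity) hinterp).trans
    (rpow_mul_mul_rpow_one_sub_le hδ₀ hδ₁ hC hc (min_le_left _ _) hψαp (by positivity) ?_ hθ)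
  exact div_le_div_of_nonneg_left zero_le_two (by positivity) (by linarith)

theorem eLpNorm_le_Gnorm_mul {ψ : ℝ → ℝ} {η : Ω → ℝ} {p : ℝ} (hp : 2 ≤ p) (hψp : 0 < ψ p) :
    eLpNorm η (ENNReal.ofReal p) μ ≤ Gnorm μ ψ η * ENNReal.ofReal (ψ p) := by
  rw [← ENNReal.div_le_iff (ENNReal.ofReal_pos.2 hψp).ne' ENNReal.ofReal_ne_top]
  exact le_iSup (fun q : {q : ℝ // 2 ≤ q} =>
    eLpNorm η (ENNReal.ofReal q) μ / ENNReal.ofReal (ψ q)) ⟨p, hp⟩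

theorem Gnorm_le_mul_iSup {ν : ℝ → ℝ} (hν : ∀ p, 2 ≤ p → 0 < ν p) {η : Ω → ℝ} {K : ℝ}
    (hK : 0 ≤ K) {ρ : ℝ → ℝ}
    (h : ∀ p, 2 ≤ p → eLpNorm η (ENNReal.ofReal p) μ ≤ ENNReal.ofReal (K * ρ p)) :
    Gnorm μ ν η ≤ ENNReal.ofReal K * ⨆ p : {p : ℝ // 2 ≤ p}, ENNReal.ofReal (ρ p / ν p) := by
  refine iSup_le fun ⟨p, hp⟩ => ?_
  calc eLpNorm η (ENNReal.ofReal p) μ / ENNReal.ofReal (ν p)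
      ≤ ENNReal.ofReal (K * ρ p) / ENNReal.ofReal (ν p) := by gcongr; exact h p hp
    _ = ENNReal.ofReal K * ENNReal.ofReal (ρ p / ν p) := by
      rw [← ENNReal.ofReal_div_of_pos (hν p hp), mul_div_assoc, ENNReal.ofReal_mul hK]
    _ ≤ _ := by
      gcongr
      exact le_iSup (fun q : {q : ℝ // 2 ≤ q} => ENNReal.ofReal (ρ q / ν q)) ⟨p, hp⟩

theorem tendsto_Gnorm_of_tendsto_eLpNorm_two [IsProbabilityMeasure μ] {ψ ν : ℝ → ℝ}
    (hψ : PsiClass ψ) (hν : ∀ p, 2 ≤ p → 0 < ν p)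
    (hR : Tendsto (fun δ : ℝ => ⨆ p : {p : ℝ // 2 ≤ p}, ENNReal.ofReal (Rfun ψ δ p / ν p))
      (𝓝[>] 0) (𝓝 0))
    {η : ℕ → Ω → ℝ} (hη : ∀ n, AEStronglyMeasurable (η n) μ) {C : ℝ} (hC : 1 ≤ C)
    (hbound : ∀ n q, 2 ≤ q → eLpNorm (η n) (ENNReal.ofReal q) μ ≤ ENNReal.ofReal (C * ψ q))
    (h₂ : Tendsto (fun n => eLpNorm (η n) 2 μ) atTop (𝓝 0)) :
    Tendsto (fun n => Gnorm μ ν (η n)) atTop (𝓝 0) := by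
  set δ : ℕ → ℝ := fun n => (eLpNorm (η n) 2 μ).toReal
  have hfin n : eLpNorm (η n) 2 μ ≠ ∞ := by
    simpa using ((hbound n 2 le_rfl).trans_lt ENNReal.ofReal_lt_top).ne
  have hδ : Tendsto δ atTop (𝓝[≥] 0) := by
    refine tendsto_nhdsWithin_iff.2 ⟨?_, Eventually.of_forall fun n => ENNReal.toReal_nonneg⟩
    have h := (ENNReal.tendsto_toReal ENNReal.zero_ne_top).comp h₂
    rwa [ENNReal.toReal_zero] at h
  set K := C / min 1 (ψ 2)
  have hK : 0 ≤ K := div_nonneg (by positivity) (lt_min one_pos (hψ.pos 2 le_rfl)).le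
  have hle : ∀ᶠ n in atTop, Gnorm μ ν (η n) ≤
      ENNReal.ofReal K * ⨆ p : {p : ℝ // 2 ≤ p}, ENNReal.ofReal (Rfun ψ (δ n) p / ν p) := by
    filter_upwards [(tendsto_nhdsWithin_iff.1 hδ).1.eventually (eventually_le_nhds one_pos)]
      with n hn
    exact Gnorm_le_mul_iSup hν hK fun p hp => eLpNorm_le_mul_Rfun hψ (hη n) hC
      ENNReal.toReal_nonneg hn (ENNReal.ofReal_toReal (hfin n)).ge (hbound n) hp
  have hlim := ENNReal.Tendsto.const_mul ((tendsto_iSup_Rfun_div_nhdsGE hR).comp hδ)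
    (Or.inr (ENNReal.ofReal_ne_top (r := K)))
  rw [mul_zero] at hlim
  exact tendsto_of_tendsto_of_tendsto_of_le_of_le' tendsto_const_nhds hlim
    (Eventually.of_forall fun _ => zero_le) hle

end

theorem stmt12 {Ω : Type*} [m0 : MeasurableSpace Ω] (μ : Measure Ω) [IsProbabilityMeasure μ]
    (ψ ν : ℝ → ℝ) (hψ : PsiClass ψ) (hν : PsiClass ν)
    (hR : Filter.Tendsto
      (fun δ : ℝ => ⨆ p : {p : ℝ // 2 ≤ p}, ENNReal.ofReal (Rfun ψ δ (p : ℝ) / ν (p : ℝ)))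
      (𝓝[>] (0:ℝ)) (𝓝 0))
    (ℱ : Filtration ℕ m0) (S : ℕ → Ω → ℝ) (hmart : Martingale S ℱ μ)
    (hbdd : (⨆ n : ℕ, Gnorm μ ψ (S n)) < ⊤) :
    ∃ Slim : Ω → ℝ,
      (∀ᵐ ω ∂μ, Filter.Tendsto (fun n => S n ω) Filter.atTop (𝓝 (Slim ω))) ∧
      Filter.Tendsto (fun n => Gnorm μ ν (fun ω => S n ω - Slim ω)) Filter.atTop (𝓝 0) := by
  set M := ⨆ n, Gnorm μ ψ (S n)
  have hSm n : AEStronglyMeasurable (S n) μ := (hmart.integrable n).aestronglyMeasurable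
  have hS p (hp : 2 ≤ p) n : eLpNorm (S n) (ENNReal.ofReal p) μ ≤ M * ENNReal.ofReal (ψ p) :=
    (eLpNorm_le_Gnorm_mul hp (hψ.pos p hp)).trans
      (by gcongr; exact le_iSup (fun n => Gnorm μ ψ (S n)) n)
  have hS₄ n : eLpNorm (S n) 4 μ ≤ (M * ENNReal.ofReal (ψ 4)).toNNReal := by
    rw [ENNReal.coe_toNNReal (ENNReal.mul_ne_top hbdd.ne ENNReal.ofReal_ne_top)]
    simpa using hS 4 (by norm_num) n
  obtain ⟨hae, hL2⟩ := hmart.submartingale.ae_tendsto_and_tendsto_eLpNorm_limitProcess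
    one_le_two (by norm_num) hS₄
  refine ⟨_, hae, ?_⟩
  set C := max 1 (2 * M).toReal
  have h2M : 2 * M ≤ ENNReal.ofReal C :=
    (ENNReal.ofReal_toReal (ENNReal.mul_ne_top ENNReal.ofNat_ne_top hbdd.ne)).ge.trans
      (ENNReal.ofReal_le_ofReal (le_max_right _ _))
  refine tendsto_Gnorm_of_tendsto_eLpNorm_two (C := C) hψ hν.pos hR
    (fun n => (hSm n).sub (aestronglyMeasurable_of_tendsto_ae atTop hSm hae))
    (le_max_left _ _) (fun n p hp => ?_) hL2
  refine (eLpNorm_sub_le_two_mul_of_ae_tendsto hSm hae (by simpa using one_le_two.trans hp)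
    (hS p hp) n).trans ?_
  rw [ENNReal.ofReal_mul (by positivity), ← mul_assoc]
  gcongr
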